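/- arXiv:1812.03241 — 10 statements merged into one kernel-verified Lean document; each statement's English description precedes it below -/
import Mathlib

section
/- For all integers n, P_{-n} = P_{n-7}^2 - P_{n-6} * P_{n-8}. -/
theorem stmt2 (P : ℤ → ℤ)
    (hP : ∀ n : ℤ, P n = P (n - 2) + P (n - 3))
    (hP0 : P 0 = 1) (hP1 : P 1 = 1) (hP2 : P 2 = 1) :
    ∀ n : ℤ, P (-n) = P (n - 7) ^ 2 - P (n - 6) * P (n - 8) := by
  -- abbreviations
  set g : ℤ → ℤ := fun n => P (n - 7) ^ 2 - P (n - 6) * P (n - 8) with hg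
  -- recursion at shifted arguments
  have hPs : ∀ a b c : ℤ, a = b + 2 → a = c + 3 → P a = P b + P c := by
    intro a b c h1 h2
    have := hP a
    have hb : a - 2 = b := by omega
    have hc : a - 3 = c := by omega
    rw [hb, hc] at this
    exact this
  -- g satisfies g m + g (m-1) = g (m-3)
  have ggstep : ∀ m : ℤ, g m + g (m - 1) = g (m - 3) := by
    intro m
    have h7 : P (m - 7) = P (m - 9) + P (m - 10) := hPs _ _ _ (by ring) (by ring)
    have h8 : P (m - 8) = P (m - 10) + P (m - 11) := hPs _ _ _ (by ring) (by ring)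
    have h6 : P (m - 6) = P (m - 8) + P (m - 9) := hPs _ _ _ (by ring) (by ring)
    simp only [hg]
    have e1 : m - 1 - 7 = m - 8 := by ring
    have e2 : m - 1 - 6 = m - 7 := by ring
    have e3 : m - 1 - 8 = m - 9 := by ring
    have e4 : m - 3 - 7 = m - 10 := by ring
    have e5 : m - 3 - 6 = m - 9 := by ring
    have e6 : m - 3 - 8 = m - 11 := by ring
    rw [e1, e2, e3, e4, e5, e6, h6, h8, h7]
    ring
  -- f n = P (-n) satisfies the same recursion
  have ffstep : ∀ m : ℤ, P (-m) + P (-(m - 1)) = P (-(m - 3)) := by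
    intro m
    have := hPs (-(m - 3)) (-(m - 1)) (-m) (by ring) (by ring)
    linarith
  -- compute small values of P
  have pm1 : P (-1) = 0 := by have := hPs 2 0 (-1) (by ring) (by ring); linarith
  have pm2 : P (-2) = 1 := by have := hPs 1 (-1) (-2) (by ring) (by ring); linarith
  have pm3 : P (-3) = 0 := by have := hPs 0 (-2) (-3) (by ring) (by ring); linarith
  have pm4 : P (-4) = 0 := by have := hPs (-1) (-3) (-4) (by ring) (by ring); linarith
  have pm5 : P (-5) = 1 := by have := hPs (-2) (-4) (-5) (by ring) (by ring); linarith
  have pm6 : P (-6) = -1 := by have := hPs (-3) (-5) (-6) (by ring) (by ring); linarith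
  have pm7 : P (-7) = 1 := by have := hPs (-4) (-6) (-7) (by ring) (by ring); linarith
  have pm8 : P (-8) = 0 := by have := hPs (-5) (-7) (-8) (by ring) (by ring); linarith
  -- the claim
  have key : ∀ n : ℤ, P (-n) = g n ∧ P (-(n + 1)) = g (n + 1) ∧ P (-(n + 2)) = g (n + 2) := by
    intro n
    induction n using Int.induction_on with
    | zero =>
      refine ⟨?_, ?_, ?_⟩ <;> simp only [hg] <;> norm_num
        [pm1, pm2, pm3, pm4, pm5, pm6, pm7, pm8, hP0]
    | succ k ih =>
      obtain ⟨h0, h1, h2⟩ := ih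
      refine ⟨by convert h1 using 2 <;> ring, by convert h2 using 2 <;> ring, ?_⟩
      have hf := ffstep ((k : ℤ) + 3)
      have hgs := ggstep ((k : ℤ) + 3)
      have e1 : (k : ℤ) + 3 - 1 = k + 2 := by ring
      have e2 : (k : ℤ) + 3 - 3 = k := by ring
      rw [e1, e2] at hf hgs
      have e3 : ((k : ℤ) + 1) + 2 = k + 3 := by ring
      rw [e3]
      linarith
    | pred k ih =>
      obtain ⟨h0, h1, h2⟩ := ih
      have hf := ffstep (-(k : ℤ) + 2)
      have hgs := ggstep (-(k : ℤ) + 2)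
      have e1 : -(k : ℤ) + 2 - 1 = -k + 1 := by ring
      have e2 : -(k : ℤ) + 2 - 3 = -(k + 1) := by ring
      rw [e1, e2] at hf hgs
      have c0 : P (-(-(k : ℤ) + 2)) = g (-(k : ℤ) + 2) := by
        convert h2 using 2 <;> push_cast <;> ring
      have c1 : P (-(-(k : ℤ) + 1)) = g (-(k : ℤ) + 1) := by
        convert h1 using 2 <;> push_cast <;> ring
      have c2 : P (-(-(k : ℤ) - 1)) = P (- -((k:ℤ) + 1)) := by congr 1; ring
      have c3 : g (-(k : ℤ) - 1) = g (-((k:ℤ) + 1)) := by congr 1; ring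
      refine ⟨by rw [c2, c3]; linarith, by convert h0 using 2 <;> push_cast <;> ring,
        by convert h1 using 2 <;> push_cast <;> ring⟩
  intro n
  exact (key n).1
end

section
/- For all integers n, 2*Q_{-n} = Q_n^2 - Q_{2n}. -/
open Matrix

private abbrev M3 : Matrix (Fin 3) (Fin 3) ℤ := !![0,1,0;0,0,1;1,1,0]

private lemma hUnit : IsUnit M3.det := by
  simp [Matrix.det_fin_three]

private lemma trace_sq (A : Matrix (Fin 3) (Fin 3) ℤ) :
    (trace A)^2 - trace (A*A) = 2 * trace (adjugate A) := by
  simp [Matrix.trace_fin_three, Matrix.adjugate_fin_three, Matrix.mul_apply,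
    Fin.sum_univ_three]
  ring

private lemma M3cube : M3 ^ 3 = M3 + 1 := by
  rw [pow_succ, pow_two, Matrix.one_fin_three]
  norm_num [Matrix.mul_fin_three]

private noncomputable def f (n : ℤ) : ℤ := trace (M3 ^ n)

private lemma det_zpow_one (n : ℤ) : (M3 ^ n).det = 1 := by
  induction n using Int.induction_on with
  | zero => simp
  | succ k ih => rw [Matrix.zpow_add_one hUnit, det_mul, ih]; simp [Matrix.det_fin_three]
  | pred k ih => rw [Matrix.zpow_sub_one hUnit, det_mul, ih, Matrix.det_nonsing_inv]
                 simp [Matrix.det_fin_three]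

private lemma f_rec (n : ℤ) : f n = f (n - 2) + f (n - 3) := by
  unfold f
  have h : M3 ^ n = M3 ^ (n - 2) + M3 ^ (n - 3) := by
    have : M3 ^ n = M3 ^ (n - 3) * M3 ^ (3 : ℤ) := by
      rw [← Matrix.zpow_add hUnit]; ring_nf
    rw [this, show ((3:ℤ) = ((3:ℕ):ℤ)) by norm_num, zpow_natCast, M3cube, mul_add, mul_one,
      ← Matrix.zpow_add_one hUnit]
    ring_nf
  rw [h, trace_add]

private lemma f0 : f 0 = 3 := by simp [f, Matrix.trace_fin_three, Matrix.one_fin_three]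
private lemma f1 : f 1 = 0 := by simp [f, zpow_one, Matrix.trace_fin_three]
private lemma f2 : f 2 = 2 := by
  rw [f, show ((2:ℤ) = ((2:ℕ):ℤ)) by norm_num, zpow_natCast, pow_two]
  norm_num [Matrix.mul_fin_three, Matrix.trace_fin_three]
  rfl

private lemma f_id (n : ℤ) : 2 * f (-n) = f n ^ 2 - f (2 * n) := by
  have hinv : (M3 ^ n)⁻¹ = adjugate (M3 ^ n) := by
    rw [Matrix.inv_def, det_zpow_one, Ring.inverse_one, one_smul]
  have h1 : f (-n) = trace (adjugate (M3 ^ n)) := by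
    rw [f, Matrix.zpow_neg hUnit, hinv]
  have h2 : f (2 * n) = trace (M3 ^ n * M3 ^ n) := by
    rw [f, two_mul, Matrix.zpow_add hUnit]
  rw [h1, h2, f, ← trace_sq]

theorem stmt3 (Q : ℤ → ℤ)
    (hQ : ∀ n : ℤ, Q n = Q (n - 2) + Q (n - 3))
    (hQ0 : Q 0 = 3) (hQ1 : Q 1 = 0) (hQ2 : Q 2 = 2) :
    ∀ n : ℤ, 2 * Q (-n) = Q n ^ 2 - Q (2 * n) := by
  have E : ∀ m l : ℤ, m = l → Q m = f m → Q l = f l := by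
    rintro m l rfl h; exact h
  have key : ∀ n : ℤ, Q n = f n := by
    have main : ∀ n : ℤ, Q n = f n ∧ Q (n+1) = f (n+1) ∧ Q (n+2) = f (n+2) := by
      intro n
      induction n using Int.induction_on with
      | zero =>
        refine ⟨by rw [hQ0, f0], ?_, ?_⟩
        · exact E 1 _ (by ring) (by rw [hQ1, f1])
        · exact E 2 _ (by ring) (by rw [hQ2, f2])
      | succ k ih =>
        obtain ⟨h0, h1, h2⟩ := ih
        refine ⟨E _ _ (by ring) h1, E _ _ (by ring) h2, ?_⟩
        have hq := hQ (k + 3)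
        have hf := f_rec (k + 3)
        rw [show ((k:ℤ)+3-2) = k+1 by ring, show ((k:ℤ)+3-3) = k by ring] at hq hf
        exact E (k+3) _ (by ring) (by rw [hq, hf, h0, h1])
      | pred k ih =>
        obtain ⟨h0, h1, h2⟩ := ih
        refine ⟨?_, E _ _ (by ring) h0, E _ _ (by ring) h1⟩
        have hq := hQ (-(k:ℤ) + 2)
        have hf := f_rec (-(k:ℤ) + 2)
        rw [show (-(k:ℤ)+2-2) = -k by ring, show (-(k:ℤ)+2-3) = -k-1 by ring] at hq hf
        have h2' : Q (-(k:ℤ)+2) = f (-(k:ℤ)+2) := E _ _ (by ring) h2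
        have : Q (-(k:ℤ)-1) = f (-(k:ℤ)-1) := by
          have := h2'
          rw [hq, hf] at this
          rw [h0] at this
          linarith
        exact E _ _ (by ring) this
    exact fun n => (main n).1
  intro n
  rw [key, key, key, f_id]
end

section
/- For all integers p and n, Q_{-n}*P_p - P_{p-n} = Q_n*P_{p+n} - P_{p+2n}. -/
open Matrix

set_option maxHeartbeats 1000000 in
theorem ch3 (A : Matrix (Fin 3) (Fin 3) ℤ) :
    A ^ 3 - (trace A) • A ^ 2 + (trace (adjugate A)) • A - (det A) • 1 = 0 := by
  rw [Matrix.eta_fin_three A]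
  generalize A 0 0 = a; generalize A 0 1 = b; generalize A 0 2 = c
  generalize A 1 0 = d; generalize A 1 1 = e; generalize A 1 2 = f
  generalize A 2 0 = g; generalize A 2 1 = h; generalize A 2 2 = i
  rw [pow_succ, pow_succ, pow_succ, pow_zero, one_mul, adjugate_fin_three_of,
    det_fin_three, mul_fin_three, mul_fin_three, Matrix.one_fin_three]
  simp only [trace_fin_three_of, Matrix.smul_of, Matrix.smul_cons, Matrix.smul_empty,
    smul_eq_mul, cons_val', cons_val_zero, cons_val_one, head_cons, empty_val',
    cons_val_fin_one, head_fin_const]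
  ext x y
  fin_cases x <;> fin_cases y <;>
    simp [Matrix.sub_apply, Matrix.add_apply, Matrix.vecHead, Matrix.vecTail] <;> ring

theorem stmt4 (P Q : ℤ → ℤ)
    (hP : ∀ n : ℤ, P n = P (n - 2) + P (n - 3))
    (hP0 : P 0 = 1) (hP1 : P 1 = 1) (hP2 : P 2 = 1)
    (hQ : ∀ n : ℤ, Q n = Q (n - 2) + Q (n - 3))
    (hQ0 : Q 0 = 3) (hQ1 : Q 1 = 0) (hQ2 : Q 2 = 2) :
    ∀ p n : ℤ, Q (-n) * P p - P (p - n) = Q n * P (p + n) - P (p + 2 * n) := by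
  have hPr : ∀ m : ℤ, P (m + 3) = P (m + 1) + P m := by
    intro m; have := hP (m + 3)
    rw [show m + 3 - 2 = m + 1 by ring, show m + 3 - 3 = m by ring] at this; exact this
  have hQr : ∀ m : ℤ, Q (m + 3) = Q (m + 1) + Q m := by
    intro m; have := hQ (m + 3)
    rw [show m + 3 - 2 = m + 1 by ring, show m + 3 - 3 = m by ring] at this; exact this
  set M : Matrix (Fin 3) (Fin 3) ℤ := !![0,1,0;0,0,1;1,1,0] with hM
  set N : Matrix (Fin 3) (Fin 3) ℤ := !![-1,0,1;1,0,0;0,1,0] with hN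
  have hMN : M * N = 1 := by
    rw [hM, hN, mul_fin_three, Matrix.one_fin_three]; norm_num
  have hNM : N * M = 1 := by
    rw [hM, hN, mul_fin_three, Matrix.one_fin_three]; norm_num
  set u : (Matrix (Fin 3) (Fin 3) ℤ)ˣ := ⟨M, N, hMN, hNM⟩ with hu
  set T : ℤ → Matrix (Fin 3) (Fin 3) ℤ :=
    fun k => ((u ^ k : (Matrix (Fin 3) (Fin 3) ℤ)ˣ) : Matrix (Fin 3) (Fin 3) ℤ) with hT
  have hTsucc : ∀ k : ℤ, T (k + 1) = T k * M := by
    intro k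
    show ((u ^ (k+1) : _ˣ) : Matrix (Fin 3) (Fin 3) ℤ) = _
    rw [_root_.zpow_add_one, Units.val_mul]
  have hTpred : ∀ k : ℤ, T (k - 1) = T k * N := by
    intro k
    show ((u ^ (k-1) : _ˣ) : Matrix (Fin 3) (Fin 3) ℤ) = _
    rw [_root_.zpow_sub_one, Units.val_mul]
    rfl
  set v : ℤ → Fin 3 → ℤ := fun m => ![P m, P (m + 1), P (m + 2)] with hv
  have hvM : ∀ m : ℤ, M *ᵥ v m = v (m + 1) := by
    intro m
    funext i
    fin_cases i <;>
      simp [hM, hv, Matrix.mulVec, dotProduct, Fin.sum_univ_three]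
    · rw [show m + 1 + 1 = m + 2 by ring]
    · rw [show m + 1 + 2 = m + 3 by ring, hPr m]; ring
  have hvN : ∀ m : ℤ, N *ᵥ v m = v (m - 1) := by
    intro m
    have h1 : M *ᵥ v (m - 1) = v m := by
      rw [hvM (m - 1), show m - 1 + 1 = m by ring]
    rw [← h1, Matrix.mulVec_mulVec, hNM, Matrix.one_mulVec]
  have hTv : ∀ k m : ℤ, T k *ᵥ v m = v (m + k) := by
    intro k
    induction k using Int.induction_on with
    | zero => intro m; show ((u ^ (0:ℤ) : _ˣ) : Matrix (Fin 3) (Fin 3) ℤ) *ᵥ v m = v (m + 0)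
              rw [zpow_zero, Units.val_one, Matrix.one_mulVec, add_zero]
    | succ k ih =>
        intro m
        have h1 : T ((k : ℤ) + 1) = M * T k := by
          show ((u ^ ((k:ℤ)+1) : _ˣ) : Matrix (Fin 3) (Fin 3) ℤ) = _
          rw [show (k:ℤ) + 1 = 1 + k by ring, _root_.zpow_add, zpow_one, Units.val_mul]
        rw [h1, ← Matrix.mulVec_mulVec, ih, hvM, show m + k + 1 = m + (k + 1) by ring]
    | pred k ih =>
        intro m
        have h1 : T (-(k : ℤ) - 1) = N * T (-k) := by
          show ((u ^ (-(k:ℤ)-1) : _ˣ) : Matrix (Fin 3) (Fin 3) ℤ) = _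
          rw [show -(k:ℤ) - 1 = -1 + -k by ring, _root_.zpow_add, Units.val_mul,
            _root_.zpow_neg_one]
          rfl
        rw [h1, ← Matrix.mulVec_mulVec, ih, hvN, show m + -k - 1 = m + (-k - 1) by ring]
  have hTrec : ∀ k : ℤ, T (k + 3) = T (k + 1) + T k := by
    intro k
    have hM3 : M * M * M = M + 1 := by
      rw [hM, mul_fin_three, mul_fin_three, Matrix.one_fin_three]
      ext x y
      fin_cases x <;> fin_cases y <;>
        simp [Matrix.add_apply, Matrix.vecHead, Matrix.vecTail]
    have h1 : T (k + 3) = T k * (M * M * M) := by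
      rw [show k + 3 = k + 1 + 1 + 1 by ring, hTsucc, hTsucc, hTsucc]; noncomm_ring
    rw [h1, hM3, mul_add, mul_one, ← hTsucc]
  have hT1 : T 1 = M := by
    show ((u ^ (1:ℤ) : _ˣ) : Matrix (Fin 3) (Fin 3) ℤ) = M
    rw [zpow_one]
  have hT0 : T 0 = 1 := by
    show ((u ^ (0:ℤ) : _ˣ) : Matrix (Fin 3) (Fin 3) ℤ) = 1
    rw [zpow_zero, Units.val_one]
  have hQT : ∀ k : ℤ, trace (T k) = Q k := by
    have key : ∀ k : ℤ,
        trace (T k) = Q k ∧ trace (T (k + 1)) = Q (k + 1) ∧ trace (T (k + 2)) = Q (k + 2) := by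
      intro k
      induction k using Int.induction_on with
      | zero =>
          refine ⟨?_, ?_, ?_⟩
          · rw [hT0, hQ0]; simp [Matrix.one_fin_three, trace_fin_three_of]
          · have h1 : T (0 + 1) = M := by rw [zero_add, hT1]
            rw [h1, show (0:ℤ)+1 = 1 by ring, hQ1, hM, trace_fin_three_of]; ring
          · have h1 : T (0 + 2) = M * M := by
              rw [show (0:ℤ) + 2 = 0 + 1 + 1 by ring, hTsucc, zero_add, hT1]
            rw [h1, show (0:ℤ)+2 = 2 by ring, hQ2, hM, mul_fin_three, trace_fin_three_of]; ring
      | succ k ih =>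
          obtain ⟨h0, h1, h2⟩ := ih
          refine ⟨by rwa [show ((k:ℤ) + 1) = k + 1 by ring],
            by rwa [show (k:ℤ) + 1 + 1 = k + 2 by ring], ?_⟩
          rw [show (k:ℤ) + 1 + 2 = k + 3 by ring, hTrec, Matrix.trace_add, h0, h1, ← hQr]
      | pred k ih =>
          obtain ⟨h0, h1, h2⟩ := ih
          refine ⟨?_, by rwa [show -(k:ℤ) - 1 + 1 = -k by ring],
            by rwa [show -(k:ℤ) - 1 + 2 = -k + 1 by ring]⟩
          have ht : T (-(k:ℤ) - 1 + 3) = T (-(k:ℤ) - 1 + 1) + T (-(k:ℤ) - 1) := hTrec _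
          have hq : Q (-(k:ℤ) - 1 + 3) = Q (-(k:ℤ) - 1 + 1) + Q (-(k:ℤ) - 1) := hQr _
          rw [show -(k:ℤ) - 1 + 3 = -k + 2 by ring, show -(k:ℤ) - 1 + 1 = -k by ring] at ht hq
          have h3 := congrArg trace ht
          rw [Matrix.trace_add, h0, h2] at h3
          linarith [hq]
    exact fun k => (key k).1
  have hdet : ∀ k : ℤ, det (T k) = 1 := by
    have hdetu : Units.map (detMonoidHom : Matrix (Fin 3) (Fin 3) ℤ →* ℤ) u = 1 := by
      ext
      show det M = 1
      rw [hM, det_fin_three]; norm_num; rfl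
    intro k
    have h1 : Units.map (detMonoidHom : Matrix (Fin 3) (Fin 3) ℤ →* ℤ) (u ^ k) = 1 := by
      rw [map_zpow, hdetu, _root_.one_zpow]
    have h2 : det (T k) =
        ((Units.map (detMonoidHom : Matrix (Fin 3) (Fin 3) ℤ →* ℤ) (u ^ k) : ℤˣ) : ℤ) := rfl
    rw [h2, h1, Units.val_one]
  have hadj : ∀ k : ℤ, adjugate (T k) = T (-k) := by
    intro k
    have h1 : T k * adjugate (T k) = 1 := by
      rw [Matrix.mul_adjugate, hdet, one_smul]
    have h2 : T (-k) * T k = 1 := by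
      rw [hT]
      rw [← Units.val_mul, ← _root_.zpow_add, neg_add_cancel, zpow_zero, Units.val_one]
    calc adjugate (T k) = (T (-k) * T k) * adjugate (T k) := by rw [h2, one_mul]
      _ = T (-k) * (T k * adjugate (T k)) := by rw [mul_assoc]
      _ = T (-k) := by rw [h1, mul_one]
  intro p n
  have hCH : T n ^ 3 - Q n • T n ^ 2 + Q (-n) • T n - (1 : Matrix (Fin 3) (Fin 3) ℤ) = 0 := by
    have h := ch3 (T n)
    rwa [hQT n, hadj n, hQT (-n), hdet n, one_smul] at h
  have hpow3 : T n ^ 3 = T (n * 3) := by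
    show ((u ^ n : _ˣ) : Matrix (Fin 3) (Fin 3) ℤ) ^ 3 = ((u ^ (n*3) : _ˣ) : _)
    rw [← Units.val_pow_eq_pow_val]
    congr 1
    rw [← zpow_natCast (u ^ n) 3, ← _root_.zpow_mul]
    norm_num
  have hpow2 : T n ^ 2 = T (n * 2) := by
    show ((u ^ n : _ˣ) : Matrix (Fin 3) (Fin 3) ℤ) ^ 2 = ((u ^ (n*2) : _ˣ) : _)
    rw [← Units.val_pow_eq_pow_val]
    congr 1
    rw [← zpow_natCast (u ^ n) 2, ← _root_.zpow_mul]
    norm_num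
  have happ := congrArg (fun A : Matrix (Fin 3) (Fin 3) ℤ => A *ᵥ v (p - n)) hCH
  simp only [Matrix.sub_mulVec, Matrix.add_mulVec, Matrix.smul_mulVec,
    Matrix.one_mulVec, Matrix.zero_mulVec, hpow3, hpow2] at happ
  rw [hTv (n * 3) (p - n), hTv (n * 2) (p - n), hTv n (p - n),
    show p - n + n * 3 = p + 2 * n by ring, show p - n + n * 2 = p + n by ring,
    show p - n + n = p by ring] at happ
  have h0 := congrFun happ 0
  simp only [Pi.sub_apply, Pi.add_apply, Pi.smul_apply, Pi.zero_apply, smul_eq_mul, hv,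
    Matrix.cons_val_zero] at h0
  linarith
end

section
/- For all integers p and n, P_p*P_{-n-3} - P_{p+1}*P_{-n-4} = P_{p+n+1}*P_{n-4} - P_{p+n}*P_{n-3}. -/
theorem stmt5 (P : ℤ → ℤ)
    (hP : ∀ n : ℤ, P n = P (n - 2) + P (n - 3))
    (hP0 : P 0 = 1) (hP1 : P 1 = 1) (hP2 : P 2 = 1) :
    ∀ p n : ℤ, P p * P (-n - 3) - P (p + 1) * P (-n - 4)
      = P (p + n + 1) * P (n - 4) - P (p + n) * P (n - 3) := by
  have pm1 : P (-1) = 0 := by have h := hP 2; norm_num at h; linarith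
  have pm2 : P (-2) = 1 := by have h := hP 1; norm_num at h; linarith
  have pm3 : P (-3) = 0 := by have h := hP 0; norm_num at h; linarith
  have pm4 : P (-4) = 0 := by have h := hP (-1); norm_num at h; linarith
  have pm5 : P (-5) = 1 := by have h := hP (-2); norm_num at h; linarith
  have add : ∀ n m : ℤ, P (m + n)
      = P m * P (n - 5) + P (m + 1) * P (n - 3) + P (m + 2) * P (n - 4) := by
    intro n
    induction n using Int.induction_on with
    | zero => intro m; norm_num [pm5, pm3, pm4]
    | succ k ih =>
      intro m
      have h := ih (m + 1)
      have r1 := hP (m + 3)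
      rw [show m + 3 - 2 = m + 1 by ring, show m + 3 - 3 = m by ring] at r1
      have r2 := hP ((k : ℤ) - 2)
      rw [show (k : ℤ) - 2 - 2 = k - 4 by ring,
        show (k : ℤ) - 2 - 3 = k - 5 by ring] at r2
      rw [show m + ((k : ℤ) + 1) = m + 1 + k by ring,
        show (k : ℤ) + 1 - 5 = k - 4 by ring,
        show (k : ℤ) + 1 - 3 = k - 2 by ring,
        show (k : ℤ) + 1 - 4 = k - 3 by ring, h,
        show m + 1 + 1 = m + 2 by ring, show m + 1 + 2 = m + 3 by ring, r1, r2]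
      ring
    | pred k ih =>
      intro m
      have h := ih (m - 1)
      have r1 := hP (m + 2)
      rw [show m + 2 - 2 = m by ring, show m + 2 - 3 = m - 1 by ring] at r1
      have r2 := hP (-(k : ℤ) - 3)
      rw [show -(k : ℤ) - 3 - 2 = -k - 5 by ring,
        show -(k : ℤ) - 3 - 3 = -k - 6 by ring] at r2
      rw [show m - 1 + 1 = m by ring, show m - 1 + 2 = m + 1 by ring] at h
      rw [show m + (-(k : ℤ) - 1) = m - 1 + -k by ring,
        show -(k : ℤ) - 1 - 5 = -k - 6 by ring,
        show -(k : ℤ) - 1 - 3 = -k - 4 by ring,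
        show -(k : ℤ) - 1 - 4 = -k - 5 by ring]
      linear_combination h - P (-(k : ℤ) - 5) * r1 + P m * r2
  have cass : ∀ n : ℤ, P (-n - 3) = P (n - 4) ^ 2 - P (n - 5) * P (n - 3)
      ∧ P (-n - 4) = P (n - 3) ^ 2 - P (n - 2) * P (n - 4)
      ∧ P (-n - 5) = P (n - 2) ^ 2 - P (n - 1) * P (n - 3) := by
    intro n
    induction n using Int.induction_on with
    | zero => norm_num [pm1, pm2, pm3, pm4, pm5]
    | succ k ih =>
      obtain ⟨i1, i2, i3⟩ := ih
      have rA := hP ((k : ℤ) - 2)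
      rw [show (k : ℤ) - 2 - 2 = k - 4 by ring,
        show (k : ℤ) - 2 - 3 = k - 5 by ring] at rA
      have rB := hP ((k : ℤ) - 1)
      rw [show (k : ℤ) - 1 - 2 = k - 3 by ring,
        show (k : ℤ) - 1 - 3 = k - 4 by ring] at rB
      have rC := hP (k : ℤ)
      rw [show (k : ℤ) - 2 = k - 2 by ring] at rC
      have r3 := hP (-(k : ℤ) - 3)
      rw [show -(k : ℤ) - 3 - 2 = -k - 5 by ring,
        show -(k : ℤ) - 3 - 3 = -k - 6 by ring] at r3
      refine ⟨?_, ?_, ?_⟩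
      · rw [show -((k : ℤ) + 1) - 3 = -k - 4 by ring,
          show (k : ℤ) + 1 - 4 = k - 3 by ring,
          show (k : ℤ) + 1 - 5 = k - 4 by ring,
          show (k : ℤ) + 1 - 3 = k - 2 by ring]
        linear_combination i2
      · rw [show -((k : ℤ) + 1) - 4 = -k - 5 by ring,
          show (k : ℤ) + 1 - 3 = k - 2 by ring,
          show (k : ℤ) + 1 - 2 = k - 1 by ring,
          show (k : ℤ) + 1 - 4 = k - 3 by ring]
        linear_combination i3
      · rw [show -((k : ℤ) + 1) - 5 = -k - 6 by ring,
          show (k : ℤ) + 1 - 2 = k - 1 by ring,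
          show (k : ℤ) + 1 - 1 = (k : ℤ) by ring,
          show (k : ℤ) + 1 - 3 = k - 2 by ring]
        linear_combination i1 - i3 - r3 + P ((k : ℤ) - 2) * rC
          + (-(P ((k : ℤ) - 1)) - P ((k : ℤ) - 4)) * rB + P ((k : ℤ) - 3) * rA
    | pred k ih =>
      obtain ⟨i1, i2, i3⟩ := ih
      rw [show -(-(k : ℤ)) - 3 = k - 3 by ring] at i1
      rw [show -(-(k : ℤ)) - 4 = k - 4 by ring] at i2
      rw [show -(-(k : ℤ)) - 5 = k - 5 by ring] at i3
      have rA := hP (-(k : ℤ) - 2)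
      rw [show -(k : ℤ) - 2 - 2 = -k - 4 by ring,
        show -(k : ℤ) - 2 - 3 = -k - 5 by ring] at rA
      have rB := hP (-(k : ℤ) - 1)
      rw [show -(k : ℤ) - 1 - 2 = -k - 3 by ring,
        show -(k : ℤ) - 1 - 3 = -k - 4 by ring] at rB
      have rd := hP (-(k : ℤ) - 3)
      rw [show -(k : ℤ) - 3 - 2 = -k - 5 by ring,
        show -(k : ℤ) - 3 - 3 = -k - 6 by ring] at rd
      have rf := hP ((k : ℤ) - 2)
      rw [show (k : ℤ) - 2 - 2 = k - 4 by ring,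
        show (k : ℤ) - 2 - 3 = k - 5 by ring] at rf
      refine ⟨?_, ?_, ?_⟩
      · rw [show -(-(k : ℤ) - 1) - 3 = k - 2 by ring,
          show -(k : ℤ) - 1 - 4 = -k - 5 by ring,
          show -(k : ℤ) - 1 - 5 = -k - 6 by ring,
          show -(k : ℤ) - 1 - 3 = -k - 4 by ring]
        linear_combination rf + i2 + i3 - P (-(k : ℤ) - 4) * rd
          - P (-(k : ℤ) - 3) * rB + (P (-(k : ℤ) - 2) + P (-(k : ℤ) - 5)) * rA
      · rw [show -(-(k : ℤ) - 1) - 4 = k - 3 by ring,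
          show -(k : ℤ) - 1 - 3 = -k - 4 by ring,
          show -(k : ℤ) - 1 - 2 = -k - 3 by ring,
          show -(k : ℤ) - 1 - 4 = -k - 5 by ring]
        linear_combination i1
      · rw [show -(-(k : ℤ) - 1) - 5 = k - 4 by ring,
          show -(k : ℤ) - 1 - 2 = -k - 3 by ring,
          show -(k : ℤ) - 1 - 1 = -k - 2 by ring,
          show -(k : ℤ) - 1 - 3 = -k - 4 by ring]
        linear_combination i2
  intro p n
  have h1 := add n p
  have h2 := add (n + 1) p
  rw [show p + (n + 1) = p + n + 1 by ring, show n + 1 - 5 = n - 4 by ring,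
    show n + 1 - 3 = n - 2 by ring, show n + 1 - 4 = n - 3 by ring] at h2
  obtain ⟨c1, c2, -⟩ := cass n
  linear_combination P p * c1 - P (p + 1) * c2 - P (n - 4) * h2 + P (n - 3) * h1
end

section
/- For all integers m and n, P_{m+n} = P_m*P_{n-5} + P_{m+1}*P_{n-3} + P_{m+2}*P_{n-4}. -/
/-!
For fixed `m`, both sides are, as functions of `n`, solutions of the Padovan recurrence: the
solutions form a module stable under shifts. A solution is determined by its values at three
consecutive integers, and at `n = 2, 3, 4` the identity reduces to the recurrence itself.
-/

section PadovanRecurrence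

variable (R : Type*) [Ring R]

def padovanSolutions : Submodule R (ℤ → R) where
  carrier := {f | ∀ n, f n = f (n - 2) + f (n - 3)}
  zero_mem' _ := (add_zero 0).symm
  add_mem' {f g} hf hg n := by
    simp only [Set.mem_ofPred_eq, Pi.add_apply] at *
    rw [hf n, hg n]
    abel
  smul_mem' c f hf n := by
    simp only [Set.mem_ofPred_eq, Pi.smul_apply, smul_eq_mul] at *
    rw [hf n, mul_add]

variable {R}

theorem comp_add_mem_padovanSolutions {f : ℤ → R} (hf : f ∈ padovanSolutions R) (c : ℤ) :
    (fun n => f (n + c)) ∈ padovanSolutions R := fun n => by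
  simpa only [sub_add_eq_add_sub] using hf (n + c)

theorem apply_add_three_of_mem_padovanSolutions {f : ℤ → R} (hf : f ∈ padovanSolutions R)
    (k : ℤ) : f (k + 3) = f (k + 1) + f k := by
  have := hf (k + 3)
  rwa [show k + 3 - 2 = k + 1 by ring, add_sub_cancel_right] at this

theorem eq_zero_of_mem_padovanSolutions {f : ℤ → R} (hf : f ∈ padovanSolutions R) {a : ℤ}
    (h₀ : f a = 0) (h₁ : f (a + 1) = 0) (h₂ : f (a + 2) = 0) : f = 0 := by
  have step := apply_add_three_of_mem_padovanSolutions hf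
  have window (n : ℤ) : f n = 0 ∧ f (n + 1) = 0 ∧ f (n + 2) = 0 := by
    induction n using Int.inductionOn' (b := a) with
    | zero => exact ⟨h₀, h₁, h₂⟩
    | succ k _ ih =>
      obtain ⟨hk₀, hk₁, hk₂⟩ := ih
      refine ⟨hk₁, by rwa [add_assoc], ?_⟩
      rw [show k + 1 + 2 = k + 3 by ring, step, hk₀, hk₁, add_zero]
    | pred k _ ih =>
      obtain ⟨hk₀, hk₁, hk₂⟩ := ih
      have hk := step (k - 1)
      rw [sub_add_cancel, show k - 1 + 3 = k + 2 by ring, hk₂, hk₀, zero_add] at hk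
      exact ⟨hk.symm, by rwa [sub_add_cancel], by rwa [show k - 1 + 2 = k + 1 by ring]⟩
  funext n
  exact (window n).1

theorem eq_of_mem_padovanSolutions {f g : ℤ → R} (hf : f ∈ padovanSolutions R)
    (hg : g ∈ padovanSolutions R) {a : ℤ} (h₀ : f a = g a) (h₁ : f (a + 1) = g (a + 1))
    (h₂ : f (a + 2) = g (a + 2)) : f = g :=
  sub_eq_zero.mp <| eq_zero_of_mem_padovanSolutions (sub_mem hf hg)
    (sub_eq_zero.mpr h₀) (sub_eq_zero.mpr h₁) (sub_eq_zero.mpr h₂)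

end PadovanRecurrence

theorem stmt6 (P : ℤ → ℤ)
    (hP : ∀ n : ℤ, P n = P (n - 2) + P (n - 3))
    (hP0 : P 0 = 1) (hP1 : P 1 = 1) (hP2 : P 2 = 1) :
    ∀ m n : ℤ, P (m + n) = P m * P (n - 5) + P (m + 1) * P (n - 3) + P (m + 2) * P (n - 4) := by
  intro m n
  have hPsol : P ∈ padovanSolutions ℤ := hP
  have shift := comp_add_mem_padovanSolutions hPsol
  have step := apply_add_three_of_mem_padovanSolutions hPsol
  have hPm1 : P (-1) = 0 := by simpa [hP0, hP2] using hP 2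
  have hPm2 : P (-2) = 1 := by simpa [hP1, hPm1] using (hP 1).symm
  have hPm3 : P (-3) = 0 := by simpa [hP0, hPm2] using hP 0
  have key : (fun n => P (n + m)) =
      P m • (fun n => P (n + -5)) + P (m + 1) • (fun n => P (n + -3)) +
        P (m + 2) • (fun n => P (n + -4)) := by
    refine eq_of_mem_padovanSolutions (a := 2) (shift m)
      (add_mem (add_mem (Submodule.smul_mem _ _ (shift _)) (Submodule.smul_mem _ _ (shift _)))
        (Submodule.smul_mem _ _ (shift _))) ?_ ?_ ?_
    · norm_num [hPm1, hPm2, hPm3, add_comm]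
    · norm_num [hPm1, hPm2, hP0, add_comm, step m]
    · have h := step (m + 1)
      rw [show m + 1 + 3 = m + 4 by ring, show m + 1 + 1 = m + 2 by ring] at h
      norm_num [hPm1, hP0, hP1, add_comm, h]
  simpa [add_comm, sub_eq_add_neg] using congrFun key n
end

section
/- For all integers n, Q_{-n} = Q_n*P_n - Q_{n-1}*P_{n-2} - P_{2n-2}. -/
def T (P Q : ℤ → ℤ) (n : ℤ) : Prop :=
  P (2*n-3) = (-1)*P (n-2)*P (n-2) + (2)*P (n-2)*P (n-1) + (1)*P (n-1)*P (n-1) + (-2)*P (n-1)*P n + (1)*P n*P n ∧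
  P (2*n-2) = (-2)*P (n-2)*P (n-1) + (2)*P (n-2)*P n + (2)*P (n-1)*P n + (-1)*P n*P n ∧
  P (2*n-1) = (1)*P (n-2)*P (n-2) + (2)*P (n-2)*P (n-1) + (-2)*P (n-2)*P n + (1)*P n*P n ∧
  Q (-n) = (3)*P (n-2)*P (n-2) + (1)*P (n-2)*P (n-1) + (-2)*P (n-2)*P n + (-3)*P (n-1)*P n + (2)*P n*P n ∧
  Q (-n-1) = (2)*P (n-2)*P (n-2) + (2)*P (n-2)*P (n-1) + (-3)*P (n-2)*P n + (3)*P (n-1)*P (n-1) + (-2)*P (n-1)*P n ∧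
  Q (-n-2) = (-3)*P (n-2)*P (n-1) + (-2)*P (n-2)*P n + (-1)*P (n-1)*P (n-1) + (3)*P n*P n ∧
  Q (n-2) = (4)*P (n-2) + (2)*P (n-1) + (-3)*P n ∧
  Q (n-1) = (-3)*P (n-2) + (1)*P (n-1) + (2)*P n ∧
  Q n = (2)*P (n-2) + (-1)*P (n-1) + (1)*P n

lemma step_up (P Q : ℤ → ℤ) (hP : ∀ n : ℤ, P n = P (n - 2) + P (n - 3))
    (hQ : ∀ n : ℤ, Q n = Q (n - 2) + Q (n - 3)) (n : ℤ) (ih : T P Q n) : T P Q (n+1) := by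
  unfold T at ih ⊢
  obtain ⟨d1,d2,d3,e0,e1,e2,g0,g1,g2⟩ := ih
  have hp1 := hP (n+1)
  have hd0 := hP (2*n)
  have hd1 := hP (2*n+1)
  have hq0 := hQ (-n)
  have hg1 := hQ (n+1)
  refine ⟨?_,?_,?_,?_,?_,?_,?_,?_,?_⟩
  · linear_combination (norm := ring_nf) d3 + (-P (n+1) - P (n-2) - P (n-1) + 2*P n) * hp1
  · linear_combination (norm := ring_nf) hd0 + d1 + d2 + (P (n+1) + P (n-2) - P (n-1) - 2*P n) * hp1
  · linear_combination (norm := ring_nf) hd1 + d2 + d3 + (-P (n+1) - P (n-2) + P (n-1)) * hp1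
  · linear_combination (norm := ring_nf) e1 + (-2*P (n+1) - 2*P (n-2) + 3*P n) * hp1
  · linear_combination (norm := ring_nf) e2 + (3*P (n-1) + 2*P n) * hp1
  · linear_combination (norm := ring_nf) -hq0 + e0 - e2 + (-3*P (n+1) - 3*P (n-2) - P (n-1)) * hp1
  · linear_combination (norm := ring_nf) g1 + 3*hp1
  · linear_combination (norm := ring_nf) g2 - 2*hp1
  · linear_combination (norm := ring_nf) hg1 + g1 + g0 - hp1

lemma step_down (P Q : ℤ → ℤ) (hP : ∀ n : ℤ, P n = P (n - 2) + P (n - 3))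
    (hQ : ∀ n : ℤ, Q n = Q (n - 2) + Q (n - 3)) (n : ℤ) (ih : T P Q n) : T P Q (n-1) := by
  unfold T at ih ⊢
  obtain ⟨d1,d2,d3,e0,e1,e2,g0,g1,g2⟩ := ih
  have hp0 := hP n
  have hdm2 := hP (2*n-2)
  have hdm1 := hP (2*n-1)
  have hq1 := hQ (-n+1)
  have hg0 := hQ n
  refine ⟨?_,?_,?_,?_,?_,?_,?_,?_,?_⟩
  · linear_combination (norm := ring_nf) -hdm2 + hdm1 + d2 - d3 + d1 + (-P (n-3) + 3*P (n-2) - P n) * hp0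
  · linear_combination (norm := ring_nf) -hdm1 + d3 - d1 + (-2*P (n-2) + 2*P (n-1)) * hp0
  · linear_combination (norm := ring_nf) d1 + (P (n-3) + P (n-2) - 2*P (n-1) + P n) * hp0
  · linear_combination (norm := ring_nf) hq1 + e1 + e2 + (3*P (n-3) - 2*P (n-2) - 2*P (n-1) + 3*P n) * hp0
  · linear_combination (norm := ring_nf) e0 + (2*P (n-3) - 3*P (n-1) + 2*P n) * hp0
  · linear_combination (norm := ring_nf) e1 + (-3*P (n-2) - 2*P (n-1)) * hp0
  · linear_combination (norm := ring_nf) -hg0 + g2 - g0 + 4*hp0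
  · linear_combination (norm := ring_nf) g0 - 3*hp0
  · linear_combination (norm := ring_nf) g1 + 2*hp0

theorem stmt8 (P Q : ℤ → ℤ)
    (hP : ∀ n : ℤ, P n = P (n - 2) + P (n - 3))
    (hP0 : P 0 = 1) (hP1 : P 1 = 1) (hP2 : P 2 = 1)
    (hQ : ∀ n : ℤ, Q n = Q (n - 2) + Q (n - 3))
    (hQ0 : Q 0 = 3) (hQ1 : Q 1 = 0) (hQ2 : Q 2 = 2) :
    ∀ n : ℤ, Q (-n) = Q n * P n - Q (n - 1) * P (n - 2) - P (2 * n - 2) := by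
  have hPm1 : P (-1) = 0 := by have e := hP 2; norm_num at e; linarith
  have hPm2 : P (-2) = 1 := by have e := hP 1; norm_num at e; linarith
  have hPm3 : P (-3) = 0 := by have e := hP 0; norm_num at e; linarith
  have hQm1 : Q (-1) = -1 := by have e := hQ 2; norm_num at e; linarith
  have hQm2 : Q (-2) = 1 := by have e := hQ 1; norm_num at e; linarith
  have key : ∀ n : ℤ, T P Q n := by
    intro n
    induction n using Int.induction_on with
    | zero =>
      unfold T
      norm_num [hPm3, hPm2, hPm1, hP0, hQ0, hQm1, hQm2]
    | succ i ih => exact step_up P Q hP hQ i ih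
    | pred i ih => exact step_down P Q hP hQ (-i) ih
  intro n
  obtain ⟨d1,d2,d3,e0,e1,e2,g0,g1,g2⟩ := key n
  linear_combination (norm := ring_nf) e0 + d2 - P n * g2 + P (n-2) * g1
end

section
/- For every positive integer n and every integer p, the sum over j from 0 to ⌊n/2⌋ of (-1)^j * (n/(n-j)) * C(n-j, j) * P_{p+n-3j} equals (-1)^n * (Q_n * P_p - P_{n+p}), where the summand coefficient n/(n-j) * C(n-j, j) is the integer (n * (n-j-1)! )/(j! (n-2j)!). -/
private def padA (P : ℤ → ℤ) (m : ℕ) (q : ℤ) : ℤ :=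
  ∑ j ∈ Finset.range (m / 2 + 1),
    (-1 : ℤ) ^ j * ((m - j).choose j : ℤ) * P (q + m - 3 * j)

private theorem coeff0 (n : ℕ) (hn : 1 ≤ n) :
    (n * Nat.factorial (n - 0 - 1)) / (Nat.factorial 0 * Nat.factorial (n - 2 * 0)) = 1 := by
  simp only [Nat.sub_zero, Nat.mul_zero, Nat.factorial_zero, one_mul]
  rw [Nat.mul_factorial_pred (Nat.pos_iff_ne_zero.mp hn), Nat.div_self (Nat.factorial_pos n)]

private theorem coeff_key (n j : ℕ) (hj : 1 ≤ j) (h2 : 2 * j ≤ n) :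
    n * Nat.factorial (n - j - 1)
      = ((n - j).choose j + (n - j - 1).choose (j - 1)) *
          (Nat.factorial j * Nat.factorial (n - 2 * j)) := by
  have h1 : (n - j).choose j * Nat.factorial j * Nat.factorial (n - j - j)
      = Nat.factorial (n - j) := Nat.choose_mul_factorial_mul_factorial (by omega)
  have h2' : (n - j - 1).choose (j - 1) * Nat.factorial (j - 1) *
      Nat.factorial (n - j - 1 - (j - 1)) = Nat.factorial (n - j - 1) :=
    Nat.choose_mul_factorial_mul_factorial (by omega)
  rw [show n - j - j = n - 2 * j by omega] at h1
  rw [show n - j - 1 - (j - 1) = n - 2 * j by omega] at h2'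
  have hfj : Nat.factorial j = j * Nat.factorial (j - 1) := by
    conv_lhs => rw [show j = (j-1)+1 by omega, Nat.factorial_succ]
    congr 1; omega
  have hnj : Nat.factorial (n - j) = (n - j) * Nat.factorial (n - j - 1) := by
    conv_lhs => rw [show n - j = (n-j-1)+1 by omega, Nat.factorial_succ]
    congr 1; omega
  calc n * Nat.factorial (n - j - 1)
      = (n - j) * Nat.factorial (n - j - 1) + j * Nat.factorial (n - j - 1) := by
        rw [← add_mul]; congr 1; omega
    _ = ((n - j).choose j + (n - j - 1).choose (j - 1)) *
          (Nat.factorial j * Nat.factorial (n - 2 * j)) := by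
        rw [← hnj, ← h1, ← h2', hfj]; ring

private theorem coeff_eq (n j : ℕ) (hj : 1 ≤ j) (h2 : 2 * j ≤ n) :
    (n * Nat.factorial (n - j - 1)) / (Nat.factorial j * Nat.factorial (n - 2 * j))
      = (n - j).choose j + (n - j - 1).choose (j - 1) := by
  have hpos : 0 < Nat.factorial j * Nat.factorial (n - 2 * j) :=
    Nat.mul_pos (Nat.factorial_pos _) (Nat.factorial_pos _)
  rw [coeff_key n j hj h2, Nat.mul_div_cancel _ hpos]

private theorem padS_eq (P : ℤ → ℤ) (n : ℕ) (hn : 2 ≤ n) (p : ℤ) :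
    ∑ j ∈ Finset.range (n / 2 + 1),
        (-1 : ℤ) ^ j * ((n * Nat.factorial (n - j - 1)) /
          (Nat.factorial j * Nat.factorial (n - 2 * j)) : ℕ) * P (p + n - 3 * j)
      = padA P n p - padA P (n - 2) (p - 1) := by
  obtain ⟨m, rfl⟩ : ∃ m, n = m + 2 := ⟨n - 2, by omega⟩
  have hr : (m + 2) / 2 + 1 = (m / 2 + 1) + 1 := by omega
  unfold padA
  rw [show m + 2 - 2 = m by omega, hr]
  rw [Finset.sum_range_succ']
  conv_rhs => rw [Finset.sum_range_succ']
  have e0 : ((m+2) * Nat.factorial (m+2-0-1)) /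
      (Nat.factorial 0 * Nat.factorial (m+2-2*0)) = 1 := coeff0 (m+2) (by omega)
  have key : ∀ i ∈ Finset.range (m / 2 + 1),
      (-1 : ℤ) ^ (i+1) * (((m+2) * Nat.factorial (m+2-(i+1)-1)) /
          (Nat.factorial (i+1) * Nat.factorial (m+2-2*(i+1))) : ℕ) *
            P (p + ((m+2 : ℕ) : ℤ) - 3 * ((i+1 : ℕ) : ℤ))
      = (-1 : ℤ) ^ (i+1) * ((m+2-(i+1)).choose (i+1) : ℤ) *
            P (p + ((m+2 : ℕ) : ℤ) - 3 * ((i+1 : ℕ) : ℤ))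
        - (-1 : ℤ) ^ i * ((m - i).choose i : ℤ) * P ((p-1) + m - 3 * i) := by
    intro i hi
    simp only [Finset.mem_range] at hi
    rw [coeff_eq (m+2) (i+1) (by omega) (by omega)]
    rw [show m + 2 - (i+1) - 1 = m - i by omega, show (i+1) - 1 = i by omega]
    have harg : (p-1) + (m:ℤ) - 3 * i = p + ((m+2 : ℕ) : ℤ) - 3 * ((i+1 : ℕ) : ℤ) := by
      push_cast; ring
    rw [harg]
    push_cast
    rw [pow_succ]
    ring
  rw [Finset.sum_congr rfl key, Finset.sum_sub_distrib]
  rw [e0]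
  simp only [Nat.choose_zero_right]
  push_cast
  ring

private theorem padA_rec (P : ℤ → ℤ) (m : ℕ) (p : ℤ) :
    padA P (m + 2) p = padA P (m + 1) (p + 1) - padA P m (p - 1) := by
  have hr : (m + 2) / 2 + 1 = (m / 2 + 1) + 1 := by omega
  unfold padA
  rw [hr]
  rw [Finset.sum_range_succ']
  have key : ∀ i ∈ Finset.range (m / 2 + 1),
      (-1 : ℤ) ^ (i+1) * ((m + 2 - (i+1)).choose (i+1) : ℤ) *
          P (p + ((m+2 : ℕ) : ℤ) - 3 * ((i+1 : ℕ) : ℤ))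
      = - ((-1 : ℤ) ^ i * ((m - i).choose (i+1) : ℤ) *
            P (p + ((m+2 : ℕ) : ℤ) - 3 * ((i+1 : ℕ) : ℤ)))
        - (-1 : ℤ) ^ i * ((m - i).choose i : ℤ) * P ((p-1) + (m : ℤ) - 3 * (i : ℤ)) := by
    intro i hi
    simp only [Finset.mem_range] at hi
    have hpas : (m + 2 - (i+1)).choose (i+1) = (m - i).choose i + (m - i).choose (i+1) := by
      rw [show m + 2 - (i+1) = (m - i) + 1 by omega]
      rw [Nat.choose_succ_succ]
    rw [hpas]
    have harg : (p-1) + (m:ℤ) - 3 * (i:ℤ) = p + ((m+2 : ℕ) : ℤ) - 3 * ((i+1 : ℕ) : ℤ) := by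
      push_cast; ring
    rw [harg]
    push_cast
    rw [pow_succ]
    ring
  rw [Finset.sum_congr rfl key]
  have hsplit : ∀ (f g : ℕ → ℤ), ∑ i ∈ Finset.range (m/2+1), (- f i - g i)
      = - (∑ i ∈ Finset.range (m/2+1), f i) - ∑ i ∈ Finset.range (m/2+1), g i := by
    intro f g
    simp [Finset.sum_add_distrib, Finset.sum_neg_distrib, sub_eq_add_neg]
  rw [hsplit]
  conv_rhs => rw [Finset.sum_range_succ']
  simp only [Nat.choose_zero_right, pow_zero, Nat.cast_one, one_mul, Nat.cast_zero,
    mul_zero, Nat.sub_zero]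
  have hT : ∑ i ∈ Finset.range (m/2+1), (-1 : ℤ) ^ i * ((m - i).choose (i+1) : ℤ)
        * P (p + ((m+2 : ℕ) : ℤ) - 3 * ((i+1 : ℕ) : ℤ))
      = ∑ i ∈ Finset.range ((m+1)/2), (-1 : ℤ) ^ i * ((m - i).choose (i+1) : ℤ)
        * P (p + ((m+2 : ℕ) : ℤ) - 3 * ((i+1 : ℕ) : ℤ)) := by
    rcases Nat.even_or_odd m with ⟨k, hk⟩ | ⟨k, hk⟩
    · subst hk
      rw [show (k + k)/2 + 1 = k + 1 by omega, show (k + k + 1)/2 = k by omega,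
        Finset.sum_range_succ]
      rw [show k + k - k = k by omega, Nat.choose_succ_self]
      simp
    · subst hk
      rw [show (2*k+1)/2 + 1 = k + 1 by omega, show (2*k+1+1)/2 = k + 1 by omega]
  have key2 : ∀ i ∈ Finset.range ((m+1)/2),
      (-1:ℤ)^(i+1) * ((m+1-(i+1)).choose (i+1) : ℤ) * P (p+1+((m+1:ℕ):ℤ) - 3*((i+1:ℕ):ℤ))
      = -((-1:ℤ)^i * ((m-i).choose (i+1):ℤ) * P (p + ((m+2:ℕ):ℤ) - 3*((i+1:ℕ):ℤ))) := by
    intro i _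
    rw [show m+1-(i+1) = m-i by omega,
      show p+1+((m+1:ℕ):ℤ) - 3*((i+1:ℕ):ℤ) = p + ((m+2:ℕ):ℤ) - 3*((i+1:ℕ):ℤ) by push_cast; ring,
      pow_succ]
    ring
  rw [hT, Finset.sum_congr rfl key2]
  push_cast
  rw [Finset.sum_neg_distrib,
    show p + 1 + ((m:ℤ)+1) - 0 = p + ((m:ℤ)+2) - 0 by ring]
  ring

private theorem padG (P Q : ℤ → ℤ)
    (hP : ∀ n : ℤ, P n = P (n - 2) + P (n - 3))
    (hQ : ∀ n : ℤ, Q n = Q (n - 2) + Q (n - 3))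
    (hQ0 : Q 0 = 3) (hQ1 : Q 1 = 0) (hQ2 : Q 2 = 2) :
    ∀ n : ℕ, ∀ p : ℤ,
      Q n * P p + Q ((n : ℤ) - 1) * P (p + 1) + Q ((n : ℤ) - 2) * P (p - 1)
        = 2 * P ((n : ℤ) + p) + P ((n : ℤ) + p - 3) := by
  intro n
  induction n using Nat.strong_induction_on with
  | _ n ih =>
    have hQm1 : Q (-1) = -1 := by have := hQ 2; ring_nf at this; linarith
    have hQm2 : Q (-2) = 1 := by
      have h2 := hQ 2; have h1 := hQ 1
      ring_nf at h2 h1; linarith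
    rcases lt_or_ge n 3 with hlt | hge
    · interval_cases n
      · intro p
        have h1 := hP (p + 1); have h0 := hP p
        push_cast
        rw [hQ0, hQm1, hQm2]
        ring_nf at h1 h0 ⊢
        linarith
      · intro p
        have h1 := hP (p + 1)
        push_cast
        rw [hQ1, hQ0, hQm1]
        ring_nf at h1 ⊢
        linarith
      · intro p
        have h1 := hP (p + 2)
        push_cast
        rw [hQ2, hQ1, hQ0]
        ring_nf at h1 ⊢
        linarith
    · obtain ⟨k, rfl⟩ : ∃ k, n = k + 3 := ⟨n - 3, by omega⟩
      intro p
      have ih2 := ih (k + 1) (by omega) p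
      have ih3 := ih k (by omega) p
      have m1 : Q ((k:ℤ) + 3) * P p = Q ((k:ℤ) + 1) * P p + Q (k:ℤ) * P p := by
        rw [hQ ((k:ℤ) + 3)]; ring_nf
      have m2 : Q ((k:ℤ) + 2) * P (p + 1)
          = Q (k:ℤ) * P (p + 1) + Q ((k:ℤ) - 1) * P (p + 1) := by
        rw [hQ ((k:ℤ) + 2)]; ring_nf
      have m3 : Q ((k:ℤ) + 1) * P (p - 1)
          = Q ((k:ℤ) - 1) * P (p - 1) + Q ((k:ℤ) - 2) * P (p - 1) := by
        rw [hQ ((k:ℤ) + 1)]; ring_nf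
      have f1 := hP ((k : ℤ) + 3 + p)
      have f2 := hP ((k : ℤ) + p)
      push_cast at ih2 ih3 ⊢
      ring_nf at ih2 ih3 m1 m2 m3 f1 f2 ⊢
      linarith

theorem stmt16 (P Q : ℤ → ℤ)
    (hP : ∀ n : ℤ, P n = P (n - 2) + P (n - 3))
    (hP0 : P 0 = 1) (hP1 : P 1 = 1) (hP2 : P 2 = 1)
    (hQ : ∀ n : ℤ, Q n = Q (n - 2) + Q (n - 3))
    (hQ0 : Q 0 = 3) (hQ1 : Q 1 = 0) (hQ2 : Q 2 = 2) :
    ∀ (n : ℕ), 0 < n → ∀ p : ℤ,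
      ∑ j ∈ Finset.range (n / 2 + 1),
        (-1 : ℤ) ^ j * ((n * Nat.factorial (n - j - 1)) /
          (Nat.factorial j * Nat.factorial (n - 2 * j)) : ℕ) * P (p + n - 3 * j)
      = (-1 : ℤ) ^ n * (Q n * P p - P (n + p)) := by
  have main : ∀ n : ℕ, 2 ≤ n → ∀ p : ℤ,
      padA P n p - padA P (n - 2) (p - 1) = (-1 : ℤ) ^ n * (Q n * P p - P (n + p)) := by
    intro n
    induction n using Nat.strong_induction_on with
    | _ n ih =>
      intro hn p
      rcases lt_or_ge n 4 with hlt | hge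
      · interval_cases n
        · -- n = 2
          unfold padA
          norm_num [Finset.sum_range_succ]
          rw [hQ2]
          have h1 := hP (p + 2)
          ring_nf at h1 ⊢
          linarith
        · -- n = 3
          unfold padA
          norm_num [Finset.sum_range_succ]
          have hQ3 : Q 3 = 3 := by
            have := hQ 3; norm_num at this; rw [hQ1, hQ0] at this; linarith
          rw [hQ3]
          ring_nf
          try linarith
      · obtain ⟨k, rfl⟩ : ∃ k, n = k + 4 := ⟨n - 4, by omega⟩
        rw [show k + 4 - 2 = k + 2 by omega]
        have r1 := padA_rec P (k+2) p
        have r2 := padA_rec P k (p-1)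
        rw [show p - 1 + 1 = p by ring, show p - 1 - 1 = p - 2 by ring] at r2
        have i1 := ih (k+3) (by omega) (by omega) (p+1)
        rw [show k + 3 - 2 = k + 1 by omega, show p + 1 - 1 = p by ring] at i1
        have i2 := ih (k+2) (by omega) (by omega) (p-1)
        rw [show k + 2 - 2 = k by omega] at i2
        have g := padG P Q hP hQ hQ0 hQ1 hQ2 (k+4) p
        push_cast at i1 i2 g ⊢
        ring_nf at i1 i2 g r1 r2 ⊢
        linear_combination r1 - r2 + i1 - i2 - ((-1:ℤ)^k) * g
  intro n hn p
  rcases eq_or_lt_of_le (show 1 ≤ n from hn) with h1 | h2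
  · -- n = 1
    subst h1
    norm_num [Finset.sum_range_one, Nat.factorial]
    rw [hQ1, show (1:ℤ) + p = p + 1 by ring]
    ring
  · have hn2 : 2 ≤ n := h2
    rw [padS_eq P n hn2 p, main n hn2 p]
end

section
/- For every natural number n and every integer p, the sum over j from 0 to ⌊n/2⌋ of (-1)^j * C(n-j, j) * P_{p+n-3j} equals (-1)^{n-1} * (P_{p+1} * P_{n-3} - P_p * P_{n-2}). -/
/-!
Writing `i = n - j`, the sum is `S_n(p) = ∑_{i + j = n} (-1)^j C(i, j) P_{p + i - 2j}`. Pascal's rule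
gives `S_{n+2}(p) = S_{n+1}(p + 1) - S_n(p - 1)` for an arbitrary sequence `P`. The Padovan
recurrence, applied once in each factor, shows that the right-hand side obeys the same recurrence,
and both sides agree for `n = 0, 1` because `P_{-1} = P_{-3} = 0` and `P_{-2} = 1`.
-/

open Finset

def altChooseSum (f : ℤ → ℤ) (n : ℕ) (p : ℤ) : ℤ :=
  ∑ x ∈ antidiagonal n, (-1) ^ x.2 * x.1.choose x.2 * f (p + x.1 - 2 * x.2)

theorem altChooseSum_add_two (f : ℤ → ℤ) (n : ℕ) (p : ℤ) :
    altChooseSum f (n + 2) p = altChooseSum f (n + 1) (p + 1) - altChooseSum f n (p - 1) := by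
  rw [altChooseSum, Nat.sum_antidiagonal_succ, Nat.sum_antidiagonal_succ', altChooseSum,
    Nat.sum_antidiagonal_succ', altChooseSum]
  simp only [Nat.choose_zero_succ, Nat.choose_zero_right, Nat.choose_succ_succ', Nat.cast_add,
    Nat.cast_zero, pow_succ, add_mul, mul_add, sum_add_distrib]
  ring_nf
  simp only [sum_neg_distrib, add_comm 1]
  ring

theorem altChooseSum_eq_sum_range (f : ℤ → ℤ) (n : ℕ) (p : ℤ) :
    altChooseSum f n p =
      ∑ j ∈ range (n / 2 + 1), (-1) ^ j * ((n - j).choose j : ℤ) * f (p + n - 3 * j) := by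
  rw [altChooseSum, ← Nat.sum_antidiagonal_swap, Nat.sum_antidiagonal_eq_sum_range_succ_mk]
  symm
  refine (sum_subset (fun j hj => ?_) fun j hj hj' => ?_).trans (sum_congr rfl fun j hj => ?_)
  · simp only [mem_range] at hj ⊢
    omega
  · simp only [mem_range, not_lt] at hj hj'
    rw [Nat.choose_eq_zero_of_lt (by omega), Nat.cast_zero, mul_zero, zero_mul]
  · rw [mem_range_succ_iff] at hj
    push_cast [Prod.swap, hj]
    ring_nf

theorem padovan_neg {P : ℤ → ℤ} (hP : ∀ n : ℤ, P n = P (n - 2) + P (n - 3))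
    (hP0 : P 0 = 1) (hP1 : P 1 = 1) (hP2 : P 2 = 1) :
    P (-1) = 0 ∧ P (-2) = 1 ∧ P (-3) = 0 := by
  have h0 := hP 0
  have h1 := hP 1
  have h2 := hP 2
  norm_num at h0 h1 h2
  omega

theorem altChooseSum_padovan {P : ℤ → ℤ} (hP : ∀ n : ℤ, P n = P (n - 2) + P (n - 3))
    (hP0 : P 0 = 1) (hP1 : P 1 = 1) (hP2 : P 2 = 1) (n : ℕ) (p : ℤ) :
    altChooseSum P n p = (-1) ^ (n + 1) * (P (p + 1) * P (n - 3) - P p * P (n - 2)) := by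
  obtain ⟨hm1, hm2, hm3⟩ := padovan_neg hP hP0 hP1 hP2
  induction n using Nat.twoStepInduction generalizing p with
  | zero => simp [altChooseSum, hm2, hm3]
  | one => simp [altChooseSum, Nat.sum_antidiagonal_succ, hm1, hm2]
  | more n ih0 ih1 =>
    rw [altChooseSum_add_two, ih1, ih0]
    have hp := hP (p + 2)
    have hn := hP (n : ℤ)
    push_cast
    ring_nf at hp hn ⊢
    linear_combination (-1 : ℤ) ^ n * (P (-2 + n) * hp - P p * hn)

theorem stmt17 (P : ℤ → ℤ)
    (hP : ∀ n : ℤ, P n = P (n - 2) + P (n - 3))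
    (hP0 : P 0 = 1) (hP1 : P 1 = 1) (hP2 : P 2 = 1) :
    ∀ (n : ℕ) (p : ℤ),
      ∑ j ∈ Finset.range (n / 2 + 1),
        (-1 : ℤ) ^ j * (Nat.choose (n - j) j : ℤ) * P (p + n - 3 * j)
      = (-1 : ℤ) ^ (n + 1) * (P (p + 1) * P (n - 3) - P p * P (n - 2)) := by
  intro n p
  rw [← altChooseSum_eq_sum_range]
  exact altChooseSum_padovan hP hP0 hP1 hP2 n p
end

section
/- For every natural number n and all integers m, p, the sum over j from 0 to n of (-1)^j * C(n, j) * P_{(m-1)n + p + 2j} equals (-1)^n * P_{(m-2)n + p}. -/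
/-!
For a Padovan-type sequence, `P (a + 2) - P a = P (a - 1)`, so the forward difference with step
`2` is the shift by `-1`, and its `n`-th iterate is the shift by `-n`. Expanding `Δ_[2]^[n]` by
the binomial theorem gives the identity with `a = (m - 1) * n + p`.
-/

open Finset

section PadovanRecurrence

variable {G : Type*} [AddCommGroup G]

theorem fwdDiff_two_eq_shift_of_padovan {f : ℤ → G} (hf : ∀ n, f n = f (n - 2) + f (n - 3)) :
    fwdDiff 2 f = fun a ↦ f (a - 1) := by
  ext a
  rw [fwdDiff, hf (a + 2)]
  ring_nf
  abel

theorem fwdDiff_two_iter_eq_shift_of_padovan (n : ℕ) {f : ℤ → G}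
    (hf : ∀ n, f n = f (n - 2) + f (n - 3)) : (fwdDiff 2)^[n] f = fun a ↦ f (a - n) := by
  induction n generalizing f with
  | zero => simp
  | succ n ih =>
    have hf' : ∀ k, f (k - 1) = f (k - 2 - 1) + f (k - 3 - 1) := fun k ↦ by
      rw [hf (k - 1)]; ring_nf
    rw [Function.iterate_succ_apply, fwdDiff_two_eq_shift_of_padovan hf, ih hf']
    ext a
    push_cast
    ring_nf

end PadovanRecurrence

theorem sum_neg_one_pow_mul_choose_mul_of_padovan {R : Type*} [CommRing R] {f : ℤ → R}
    (hf : ∀ n, f n = f (n - 2) + f (n - 3)) (n : ℕ) (a : ℤ) :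
    ∑ j ∈ range (n + 1), (-1 : R) ^ j * n.choose j * f (a + 2 * j) = (-1) ^ n * f (a - n) := by
  have hexp : f (a - n) =
      ∑ k ∈ range (n + 1), ((-1 : ℤ) ^ (n - k) * n.choose k) • f (a + k • 2) := by
    rw [← fwdDiff_iter_eq_sum_shift, fwdDiff_two_iter_eq_shift_of_padovan n hf]
  rw [hexp, mul_sum]
  refine sum_congr rfl fun j hj ↦ ?_
  have hjn : j ≤ n := Nat.lt_succ_iff.mp (mem_range.mp hj)
  have hsign : (-1 : R) ^ n * (-1) ^ (n - j) = (-1) ^ j := by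
    rw [← pow_add, show n + (n - j) = 2 * (n - j) + j by omega, pow_add, pow_mul, neg_one_sq,
      one_pow, one_mul]
  rw [zsmul_eq_mul, nsmul_eq_mul, mul_comm (j : ℤ) 2]
  push_cast
  rw [← hsign]
  ring

theorem stmt18_general (P : ℤ → ℤ)
    (hP : ∀ n : ℤ, P n = P (n - 2) + P (n - 3)) :
    ∀ (n : ℕ) (m p : ℤ),
      ∑ j ∈ Finset.range (n + 1),
        (-1 : ℤ) ^ j * (Nat.choose n j : ℤ) * P ((m - 1) * n + p + 2 * j)
      = (-1 : ℤ) ^ n * P ((m - 2) * n + p) := by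
  intro n m p
  rw [sum_neg_one_pow_mul_choose_mul_of_padovan hP n]
  ring_nf

theorem stmt18 (P : ℤ → ℤ)
    (hP : ∀ n : ℤ, P n = P (n - 2) + P (n - 3))
    (hP0 : P 0 = 1) (hP1 : P 1 = 1) (hP2 : P 2 = 1) :
    ∀ (n : ℕ) (m p : ℤ),
      ∑ j ∈ Finset.range (n + 1),
        (-1 : ℤ) ^ j * (Nat.choose n j : ℤ) * P ((m - 1) * n + p + 2 * j)
      = (-1 : ℤ) ^ n * P ((m - 2) * n + p) :=
  stmt18_general P hP
end

section
/- For every natural number n and all integers m, p, q, the double sum over j from 0 to n and k from 0 to j of C(n, j) * C(j, k) * P_{p-4}^k * P_{p-3}^{j-k} * P_{p-5}^{n-j} * P_{m*n + q + k + j} equals P_{(m+p)*n + q}. -/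
private def padG_s19 (P : ℤ → ℤ) (a b : ℤ) (j : ℕ) (t : ℤ) : ℤ :=
  ∑ k ∈ Finset.range (j + 1), (j.choose k : ℤ) * a ^ k * b ^ (j - k) * P (t + j + k)

private def padF (P : ℤ → ℤ) (a b c : ℤ) (n : ℕ) (t : ℤ) : ℤ :=
  ∑ j ∈ Finset.range (n + 1), (n.choose j : ℤ) * c ^ (n - j) * padG_s19 P a b j t

private lemma padG_succ (P : ℤ → ℤ) (a b : ℤ) (j : ℕ) (t : ℤ) :
    padG_s19 P a b (j + 1) t = b * padG_s19 P a b j (t + 1) + a * padG_s19 P a b j (t + 2) := by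
  unfold padG_s19
  rw [Finset.sum_range_succ']
  have hsplit : ∀ k ∈ Finset.range (j+1),
      (((j+1).choose (k+1) : ℤ)) * a ^ (k+1) * b ^ (j+1-(k+1)) * P (t + ↑(j+1) + ↑(k+1))
      = a * ((j.choose k : ℤ) * a ^ k * b ^ (j - k) * P (t + 2 + ↑j + ↑k))
        + (j.choose (k+1) : ℤ) * a ^ (k+1) * b ^ (j - k) * P (t + 2 + ↑j + ↑k) := by
    intro k hk
    have harg : (t + (↑(j+1):ℤ) + ↑(k+1)) = t + 2 + ↑j + ↑k := by push_cast; ring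
    rw [harg, Nat.succ_sub_succ, Nat.choose_succ_succ]
    push_cast
    ring
  rw [Finset.sum_congr rfl hsplit, Finset.sum_add_distrib, ← Finset.mul_sum]
  have hB : (∑ k ∈ Finset.range (j+1),
        (j.choose (k+1) : ℤ) * a ^ (k+1) * b ^ (j - k) * P (t + 2 + ↑j + ↑k))
      + ((j+1).choose 0 : ℤ) * a ^ 0 * b ^ (j+1-0) * P (t + ↑(j+1) + ↑(0:ℕ))
      = b * ∑ k ∈ Finset.range (j+1), (j.choose k : ℤ) * a ^ k * b ^ (j - k) * P (t + 1 + ↑j + ↑k) := by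
    rw [Finset.sum_range_succ, Finset.mul_sum, Finset.sum_range_succ']
    have hlast : (j.choose (j+1) : ℤ) = 0 := by simp
    rw [hlast]
    have hcongr : ∀ k ∈ Finset.range j,
        (j.choose (k+1) : ℤ) * a ^ (k+1) * b ^ (j - k) * P (t + 2 + ↑j + ↑k)
        = b * ((j.choose (k+1) : ℤ) * a ^ (k+1) * b ^ (j - (k+1)) * P (t + 1 + ↑j + ↑(k+1))) := by
      intro k hk
      have hk' : k < j := Finset.mem_range.mp hk
      have hbp : b ^ (j - k) = b ^ (j - (k+1)) * b := by
        rw [← pow_succ]; congr 1; omega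
      have harg : (t + 1 + (j:ℤ) + ↑(k+1)) = t + 2 + ↑j + ↑k := by push_cast; ring
      rw [hbp, harg]; ring
    rw [Finset.sum_congr rfl hcongr]
    have hbd : ((j+1).choose 0 : ℤ) * a ^ 0 * b ^ (j+1-0) * P (t + ↑(j+1) + ↑(0:ℕ))
        = b * ((j.choose 0 : ℤ) * a ^ 0 * b ^ (j - 0) * P (t + 1 + ↑j + ↑(0:ℕ))) := by
      have harg : (t + (↑(j+1):ℤ) + ↑(0:ℕ)) = t + 1 + ↑j + ↑(0:ℕ) := by push_cast; ring
      rw [harg]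
      simp [pow_succ]
      ring
    rw [hbd]; ring
  linarith [hB]

private lemma padF_succ (P : ℤ → ℤ) (a b c : ℤ) (n : ℕ) (t : ℤ) :
    padF P a b c (n + 1) t
      = c * padF P a b c n t + b * padF P a b c n (t + 1) + a * padF P a b c n (t + 2) := by
  unfold padF
  rw [Finset.sum_range_succ']
  have hsplit : ∀ j ∈ Finset.range (n+1),
      (((n+1).choose (j+1) : ℤ)) * c ^ (n+1-(j+1)) * padG_s19 P a b (j+1) t
      = (b * ((n.choose j : ℤ) * c ^ (n - j) * padG_s19 P a b j (t+1))
          + a * ((n.choose j : ℤ) * c ^ (n - j) * padG_s19 P a b j (t+2)))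
        + (n.choose (j+1) : ℤ) * c ^ (n - j) * padG_s19 P a b (j+1) t := by
    intro j hj
    rw [Nat.succ_sub_succ, Nat.choose_succ_succ, padG_succ]
    push_cast
    ring
  rw [Finset.sum_congr rfl hsplit, Finset.sum_add_distrib, Finset.sum_add_distrib,
    ← Finset.mul_sum, ← Finset.mul_sum]
  have hB : (∑ j ∈ Finset.range (n+1),
        (n.choose (j+1) : ℤ) * c ^ (n - j) * padG_s19 P a b (j+1) t)
      + ((n+1).choose 0 : ℤ) * c ^ (n+1-0) * padG_s19 P a b 0 t
      = c * ∑ j ∈ Finset.range (n+1), (n.choose j : ℤ) * c ^ (n - j) * padG_s19 P a b j t := by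
    rw [Finset.sum_range_succ, Finset.mul_sum, Finset.sum_range_succ']
    have hlast : (n.choose (n+1) : ℤ) = 0 := by simp
    rw [hlast]
    have hcongr : ∀ j ∈ Finset.range n,
        (n.choose (j+1) : ℤ) * c ^ (n - j) * padG_s19 P a b (j+1) t
        = c * ((n.choose (j+1) : ℤ) * c ^ (n - (j+1)) * padG_s19 P a b (j+1) t) := by
      intro j hj
      have hj' : j < n := Finset.mem_range.mp hj
      have hcp : c ^ (n - j) = c ^ (n - (j+1)) * c := by
        rw [← pow_succ]; congr 1; omega
      rw [hcp]; ring
    rw [Finset.sum_congr rfl hcongr]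
    have hbd : ((n+1).choose 0 : ℤ) * c ^ (n+1-0) * padG_s19 P a b 0 t
        = c * ((n.choose 0 : ℤ) * c ^ (n - 0) * padG_s19 P a b 0 t) := by
      simp [pow_succ]; ring
    rw [hbd]; ring
  linarith [hB]

private lemma padKey (P : ℤ → ℤ) (hP : ∀ n : ℤ, P n = P (n - 2) + P (n - 3))
    (hP0 : P 0 = 1) (hP1 : P 1 = 1) (hP2 : P 2 = 1) :
    ∀ r s : ℤ, P (s + r) = P (r - 5) * P s + P (r - 3) * P (s + 1) + P (r - 4) * P (s + 2) := by
  have hm1 : P (-1) = 0 := by have h := hP 2; norm_num at h; linarith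
  have hm2 : P (-2) = 1 := by have h := hP 1; norm_num at h; linarith
  have hm3 : P (-3) = 0 := by have h := hP 0; norm_num at h; linarith
  have hm4 : P (-4) = 0 := by have h := hP (-1); norm_num at h; linarith
  have hm5 : P (-5) = 1 := by have h := hP (-2); norm_num at h; linarith
  intro r
  induction r using Int.induction_on with
  | zero =>
    intro s
    norm_num [hm5, hm3, hm4]
  | succ k ih =>
    intro s
    rw [show s + ((k:ℤ) + 1) = (s + 1) + (k:ℤ) by ring, ih (s + 1)]
    have e2 : P (s + 1 + 1) = P (s + 2) := by rw [show s + 1 + 1 = s + 2 by ring]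
    have e3 : P (s + 1 + 2) = P (s + 1) + P s := by
      have h := hP (s + 3)
      rw [show s + 3 - 2 = s + 1 by ring, show s + 3 - 3 = s by ring] at h
      rw [show s + 1 + 2 = s + 3 by ring, h]
    have e4 : P ((k:ℤ) + 1 - 5) = P ((k:ℤ) - 4) := by rw [show (k:ℤ) + 1 - 5 = (k:ℤ) - 4 by ring]
    have e5 : P ((k:ℤ) + 1 - 4) = P ((k:ℤ) - 3) := by rw [show (k:ℤ) + 1 - 4 = (k:ℤ) - 3 by ring]
    have e6 : P ((k:ℤ) + 1 - 3) = P ((k:ℤ) - 4) + P ((k:ℤ) - 5) := by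
      have h := hP ((k:ℤ) - 2)
      rw [show (k:ℤ) - 2 - 2 = (k:ℤ) - 4 by ring, show (k:ℤ) - 2 - 3 = (k:ℤ) - 5 by ring] at h
      rw [show (k:ℤ) + 1 - 3 = (k:ℤ) - 2 by ring, h]
    rw [e2, e3, e4, e5, e6]; ring
  | pred k ih =>
    intro s
    rw [show s + (-(k:ℤ) - 1) = (s - 1) + (-(k:ℤ)) by ring, ih (s - 1)]
    have e2 : P (s - 1 + 1) = P s := by rw [show s - 1 + 1 = s by ring]
    have e3 : P (s - 1 + 2) = P (s + 1) := by rw [show s - 1 + 2 = s + 1 by ring]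
    have e4 : P (s - 1) = P (s + 2) - P s := by
      have h := hP (s + 2)
      rw [show s + 2 - 2 = s by ring, show s + 2 - 3 = s - 1 by ring] at h
      linarith
    have e5 : P (-(k:ℤ) - 1 - 4) = P (-(k:ℤ) - 5) := by
      rw [show -(k:ℤ) - 1 - 4 = -(k:ℤ) - 5 by ring]
    have e6 : P (-(k:ℤ) - 1 - 3) = P (-(k:ℤ) - 4) := by
      rw [show -(k:ℤ) - 1 - 3 = -(k:ℤ) - 4 by ring]
    have e7 : P (-(k:ℤ) - 1 - 5) = P (-(k:ℤ) - 3) - P (-(k:ℤ) - 5) := by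
      have h := hP (-(k:ℤ) - 3)
      rw [show -(k:ℤ) - 3 - 2 = -(k:ℤ) - 5 by ring, show -(k:ℤ) - 3 - 3 = -(k:ℤ) - 6 by ring] at h
      rw [show -(k:ℤ) - 1 - 5 = -(k:ℤ) - 6 by ring]; linarith
    rw [e2, e3, e4, e5, e6, e7]; ring

theorem stmt19 (P : ℤ → ℤ)
    (hP : ∀ n : ℤ, P n = P (n - 2) + P (n - 3))
    (hP0 : P 0 = 1) (hP1 : P 1 = 1) (hP2 : P 2 = 1) :
    ∀ (n : ℕ) (m p q : ℤ),
      ∑ j ∈ Finset.range (n + 1), ∑ k ∈ Finset.range (j + 1),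
        (Nat.choose n j : ℤ) * (Nat.choose j k : ℤ) *
          P (p - 4) ^ k * P (p - 3) ^ (j - k) * P (p - 5) ^ (n - j) *
          P (m * n + q + k + j)
      = P ((m + p) * n + q) := by
  intro n m p q
  have main : ∀ (N : ℕ) (t : ℤ),
      padF P (P (p - 4)) (P (p - 3)) (P (p - 5)) N t = P (t + p * N) := by
    intro N
    induction N with
    | zero =>
      intro t
      unfold padF padG_s19
      simp
    | succ N ih =>
      intro t
      rw [padF_succ, ih, ih, ih]
      have hk := padKey P hP hP0 hP1 hP2 p (t + p * N)
      rw [show t + p * ((N:ℕ) + 1 : ℕ) = (t + p * N) + p by push_cast; ring]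
      rw [hk]
      rw [show t + 1 + p * (N:ℤ) = t + p * N + 1 by ring,
          show t + 2 + p * (N:ℤ) = t + p * N + 2 by ring]
      try ring
  have conv : (∑ j ∈ Finset.range (n + 1), ∑ k ∈ Finset.range (j + 1),
        (Nat.choose n j : ℤ) * (Nat.choose j k : ℤ) *
          P (p - 4) ^ k * P (p - 3) ^ (j - k) * P (p - 5) ^ (n - j) *
          P (m * n + q + k + j))
      = padF P (P (p - 4)) (P (p - 3)) (P (p - 5)) n (m * n + q) := by
    unfold padF padG_s19
    refine Finset.sum_congr rfl ?_
    intro j hj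
    rw [Finset.mul_sum]
    refine Finset.sum_congr rfl ?_
    intro k hk
    rw [show m * (n:ℤ) + q + (k:ℤ) + (j:ℤ) = m * n + q + (j:ℤ) + (k:ℤ) by ring]
    ring
  rw [conv, main n (m * n + q)]
  rw [show m * (n:ℤ) + q + p * n = (m + p) * n + q by ring]
end
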